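/- arXiv:2605.29611 — 6 statements merged into one kernel-verified Lean document; each statement's English description precedes it below -/
import Mathlib

section
/- In the multivariate regression Y = X B + E where every row of Y satisfies S⊥' y_t = 0, the ridge regression estimator B̂^ν = (X'X + ν Λ_k)^{-1} X' Y, with ν > 0 and Λ_k any k×k diagonal matrix with positive diagonal entries, satisfies S⊥' (B̂^ν)' = 0. -/
open Matrix

/-- The ridge regression estimator `B̂ν = (XᵀX + ν Λ)⁻¹ Xᵀ Y`, with `ν > 0` and `Λ`
a diagonal matrix with positive diagonal entries, satisfies `S⊥ᵀ (B̂ν)ᵀ = 0`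
whenever every row of `Y` satisfies the constraints (`S⊥ᵀ Yᵀ = 0`). -/
theorem ridge_coeffs_satisfy_constraints {T k m p : ℕ}
    (X : Matrix (Fin T) (Fin k) ℝ) (Y : Matrix (Fin T) (Fin m) ℝ)
    (Sperp : Matrix (Fin m) (Fin p) ℝ)
    (hY : Sperpᵀ * Yᵀ = 0)
    (ν : ℝ) (hν : 0 < ν)
    (Λ : Matrix (Fin k) (Fin k) ℝ) (hΛdiag : Λ.IsDiag)
    (hΛpos : ∀ i, 0 < Λ i i)
    (Bν : Matrix (Fin k) (Fin m) ℝ)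
    (hB : Bν = (Xᵀ * X + ν • Λ)⁻¹ * Xᵀ * Y) :
    Sperpᵀ * Bνᵀ = 0 := by
  subst hB
  simp only [transpose_mul, ← Matrix.mul_assoc, hY, Matrix.zero_mul]
end

section
/- Let Σ_x and Σ_y be positive diagonal scaling matrices, X* = X Σ_x^{-1/2}, Y* = Y Σ_y^{-1/2}. If B̂^{*ν} = (X*'X* + ν Λ_k)^{-1} X*' Y* is the ridge estimator on the scaled data and B̂^ν = Σ_x^{-1/2} B̂^{*ν} Σ_y^{1/2} is the back-transformed coefficient matrix, then S⊥' (B̂^ν)' = 0 whenever S⊥' Y' = 0. -/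
open Matrix

/-- Ridge regression on scaled data: with positive diagonal scalings `Σx`, `Σy`,
`X* = X Σx^{-1/2}`, `Y* = Y Σy^{-1/2}`, ridge estimator
`B̂*ν = (X*ᵀX* + ν Λ)⁻¹ X*ᵀ Y*` and back-transform `B̂ν = Σx^{-1/2} B̂*ν Σy^{1/2}`,
one has `S⊥ᵀ (B̂ν)ᵀ = 0` whenever `S⊥ᵀ Yᵀ = 0`. -/
theorem scaled_ridge_coeffs_satisfy_constraints {T k m p : ℕ}
    (X : Matrix (Fin T) (Fin k) ℝ) (Y : Matrix (Fin T) (Fin m) ℝ)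
    (Sperp : Matrix (Fin m) (Fin p) ℝ)
    (hY : Sperpᵀ * Yᵀ = 0)
    (Sigx : Matrix (Fin k) (Fin k) ℝ) (hSigxdiag : Sigx.IsDiag)
    (hSigxpos : ∀ i, 0 < Sigx i i)
    (Sigy : Matrix (Fin m) (Fin m) ℝ) (hSigydiag : Sigy.IsDiag)
    (hSigypos : ∀ i, 0 < Sigy i i)
    (ν : ℝ) (hν : 0 < ν)
    (Λ : Matrix (Fin k) (Fin k) ℝ) (hΛdiag : Λ.IsDiag)
    (hΛpos : ∀ i, 0 < Λ i i)
    -- entrywise square roots of the diagonal scalings and their inverses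
    (Sigxinvhalf : Matrix (Fin k) (Fin k) ℝ)
    (hSigxinvhalf : Sigxinvhalf = Matrix.diagonal fun i => (Real.sqrt (Sigx i i))⁻¹)
    (Sigyinvhalf : Matrix (Fin m) (Fin m) ℝ)
    (hSigyinvhalf : Sigyinvhalf = Matrix.diagonal fun i => (Real.sqrt (Sigy i i))⁻¹)
    (Sigyhalf : Matrix (Fin m) (Fin m) ℝ)
    (hSigyhalf : Sigyhalf = Matrix.diagonal fun i => Real.sqrt (Sigy i i))
    (Xs : Matrix (Fin T) (Fin k) ℝ) (hXs : Xs = X * Sigxinvhalf)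
    (Ys : Matrix (Fin T) (Fin m) ℝ) (hYs : Ys = Y * Sigyinvhalf)
    (Bsν : Matrix (Fin k) (Fin m) ℝ)
    (hBs : Bsν = (Xsᵀ * Xs + ν • Λ)⁻¹ * Xsᵀ * Ys)
    (Bν : Matrix (Fin k) (Fin m) ℝ)
    (hB : Bν = Sigxinvhalf * Bsν * Sigyhalf) :
    Sperpᵀ * Bνᵀ = 0 := by
  subst hB hBs hYs hXs hSigyhalf hSigyinvhalf
  have h1 : (Matrix.diagonal fun i => Real.sqrt (Sigy i i)) *
      (Matrix.diagonal fun i => (Real.sqrt (Sigy i i))⁻¹) = 1 := by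
    rw [Matrix.diagonal_mul_diagonal]
    have h2 : (fun i => Real.sqrt (Sigy i i) * (Real.sqrt (Sigy i i))⁻¹) = fun _ => (1:ℝ) := by
      funext i; exact mul_inv_cancel₀ (Real.sqrt_ne_zero'.mpr (hSigypos i))
    rw [h2, Matrix.diagonal_one]
  simp only [Matrix.transpose_mul, Matrix.diagonal_transpose, Matrix.mul_assoc]
  rw [← Matrix.mul_assoc (Matrix.diagonal fun i => Real.sqrt (Sigy i i))
      (Matrix.diagonal fun i => (Real.sqrt (Sigy i i))⁻¹), h1, Matrix.one_mul,
      ← Matrix.mul_assoc Sperpᵀ Yᵀ, hY]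
  simp [Matrix.mul_assoc]
end

section
/- For the DGP y₂ = 1 + 0.8 f + ε₂, y₃ = 1 + 0.8 f + ε₃, y₁ = y₂ + y₃, with E[ε₂|I] = E[ε₃|I] = 0, if the base forecasts are conditionally unbiased (E[ŷᵢ|I] = E[yᵢ|I]), then the top-down reconciled forecasts ỹ = S G ŷ with G = [[1/2,0,0],[1/2,0,0]] and S = [[1,1],[1,0],[0,1]] are conditionally unbiased: E[ỹ|I] = E[y|I]. -/
open MeasureTheory Matrix

/-!
Since `y₂ - y₃ = ε₂ - ε₃` has conditional mean zero, `E[y₂|I] = E[y₃|I]`, and hence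
`E[y₁|I] = 2 E[y₂|I]`. Top-down reconciliation with proportions `1/2, 1/2` keeps the
unbiased total forecast `ŷ₁` and disaggregates it as `ŷ₁/2, ŷ₁/2`, whose conditional means
`E[y₁|I]/2` are exactly `E[y₂|I]` and `E[y₃|I]`.
-/

section CondExp

variable {α F : Type*} {m m0 : MeasurableSpace α} {μ : Measure α}
  [NormedAddCommGroup F] [NormedSpace ℝ F] [CompleteSpace F]

/-- Both sides vanish when `Y` is not integrable, as then neither is `Y + Z`. -/
theorem condExp_add_ae_eq_of_condExp_ae_eq_zero {Y Z : α → F} (hZ : Integrable Z μ)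
    (hZ0 : μ[Z | m] =ᵐ[μ] 0) : μ[Y + Z | m] =ᵐ[μ] μ[Y | m] := by
  by_cases hY : Integrable Y μ
  · filter_upwards [condExp_add hY hZ m, hZ0] with ω hadd hzero
    simp [hadd, hzero]
  · have hYZ : ¬Integrable (Y + Z) μ := fun h => hY (by simpa using h.sub hZ)
    rw [condExp_of_not_integrable hY, condExp_of_not_integrable hYZ]

theorem condExp_sub_ae_eq_zero {Z₁ Z₂ : α → F} (h₁ : Integrable Z₁ μ) (h₂ : Integrable Z₂ μ)
    (h₁0 : μ[Z₁ | m] =ᵐ[μ] 0) (h₂0 : μ[Z₂ | m] =ᵐ[μ] 0) : μ[Z₁ - Z₂ | m] =ᵐ[μ] 0 := by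
  filter_upwards [condExp_sub h₁ h₂ m, h₁0, h₂0] with ω hsub hz₁ hz₂
  simp [hsub, hz₁, hz₂]

theorem condExp_smul_ae_eq_of_condExp_ae_eq {U X Y : α → F} (c : ℝ)
    (hU : μ[U | m] =ᵐ[μ] μ[Y | m]) (hX : μ[X | m] =ᵐ[μ] c • μ[Y | m]) :
    μ[c • U | m] =ᵐ[μ] μ[X | m] := by
  filter_upwards [condExp_smul c U m, hU, hX] with ω hsmul hu hx
  simp [hsmul, hu, hx]

end CondExp

theorem topDown_mulVec (p q : ℝ) (v : Fin 3 → ℝ) :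
    ((!![1, 1; 1, 0; 0, 1] : Matrix (Fin 3) (Fin 2) ℝ) * !![p, 0, 0; q, 0, 0]) *ᵥ v =
      ![(p + q) * v 0, p * v 0, q * v 0] := by
  ext i
  fin_cases i <;> simp [mulVec, dotProduct, Fin.sum_univ_three, add_mul]

theorem top_down_unbiased_example_general {α : Type*}
    {m0 : MeasurableSpace α} (μ : Measure α) (I : MeasurableSpace α)
    (f e2 e3 : α → ℝ)
    (he2 : Integrable e2 μ) (he3 : Integrable e3 μ)
    (he2I : (μ[e2 | I]) =ᵐ[μ] fun _ => (0 : ℝ))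
    (he3I : (μ[e3 | I]) =ᵐ[μ] fun _ => (0 : ℝ))
    (y : α → Fin 3 → ℝ)
    (hy2 : ∀ ω, y ω 1 = 1 + 0.8 * f ω + e2 ω)
    (hy3 : ∀ ω, y ω 2 = 1 + 0.8 * f ω + e3 ω)
    (hy1 : ∀ ω, y ω 0 = y ω 1 + y ω 2)
    (yhat : α → Fin 3 → ℝ)
    (hunbiased : ∀ i, (μ[fun ω => yhat ω i | I]) =ᵐ[μ] (μ[fun ω => y ω i | I]))
    (S : Matrix (Fin 3) (Fin 2) ℝ) (hS : S = !![1, 1; 1, 0; 0, 1])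
    (G : Matrix (Fin 2) (Fin 3) ℝ) (hG : G = !![1/2, 0, 0; 1/2, 0, 0])
    (ytilde : α → Fin 3 → ℝ)
    (hytilde : ∀ ω, ytilde ω = (S * G).mulVec (yhat ω)) :
    ∀ i, (μ[fun ω => ytilde ω i | I]) =ᵐ[μ] (μ[fun ω => y ω i | I]) := by
  have hnoise : μ[e2 - e3 | I] =ᵐ[μ] 0 := condExp_sub_ae_eq_zero he2 he3 he2I he3I
  have hy12 : (fun ω => y ω 1) = (fun ω => y ω 2) + (e2 - e3) := by
    funext ω; simp only [hy2, hy3, Pi.add_apply, Pi.sub_apply]; ring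
  have hy02 : (fun ω => y ω 0) = (2 : ℝ) • (fun ω => y ω 2) + (e2 - e3) := by
    funext ω
    simp only [hy1, hy2, hy3, Pi.add_apply, Pi.sub_apply, Pi.smul_apply, smul_eq_mul]
    ring
  have h12 : μ[fun ω => y ω 1 | I] =ᵐ[μ] μ[fun ω => y ω 2 | I] :=
    hy12 ▸ condExp_add_ae_eq_of_condExp_ae_eq_zero (he2.sub he3) hnoise
  have h02 : μ[fun ω => y ω 0 | I] =ᵐ[μ] (2 : ℝ) • μ[fun ω => y ω 2 | I] :=
    (hy02 ▸ condExp_add_ae_eq_of_condExp_ae_eq_zero (he2.sub he3) hnoise).trans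
      (condExp_smul _ _ I)
  have hhalf : μ[(2⁻¹ : ℝ) • fun ω => yhat ω 0 | I] =ᵐ[μ] μ[fun ω => y ω 2 | I] := by
    refine condExp_smul_ae_eq_of_condExp_ae_eq _ (hunbiased 0) ?_
    filter_upwards [h02] with ω h
    simp [h]
  have hyt : ∀ ω, ytilde ω = ![yhat ω 0, 2⁻¹ * yhat ω 0, 2⁻¹ * yhat ω 0] := fun ω => by
    rw [hytilde, hS, hG, topDown_mulVec]; norm_num
  intro i
  match i with
  | 0 => simp only [hyt]; exact hunbiased 0
  | 1 => simp only [hyt]; exact hhalf.trans h12.symm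
  | 2 => simp only [hyt]; exact hhalf

/-- Counterexample to "top-down can never be unbiased": for the DGP
`y₂ = 1 + 0.8 f + ε₂`, `y₃ = 1 + 0.8 f + ε₃`, `y₁ = y₂ + y₃` with
`E[ε₂|I] = E[ε₃|I] = 0`, conditionally unbiased base forecasts reconciled
top-down via `G = [[1/2,0,0],[1/2,0,0]]` and `S = [[1,1],[1,0],[0,1]]` remain
conditionally unbiased. -/
theorem top_down_unbiased_example {α : Type*}
    {m0 : MeasurableSpace α} (μ : Measure α) (I : MeasurableSpace α)
    (hI : I ≤ m0)
    (f e2 e3 : α → ℝ)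
    (hf : Integrable f μ) (he2 : Integrable e2 μ) (he3 : Integrable e3 μ)
    (he2I : (μ[e2 | I]) =ᵐ[μ] fun _ => (0 : ℝ))
    (he3I : (μ[e3 | I]) =ᵐ[μ] fun _ => (0 : ℝ))
    (y : α → Fin 3 → ℝ)
    (hy2 : ∀ ω, y ω 1 = 1 + 0.8 * f ω + e2 ω)
    (hy3 : ∀ ω, y ω 2 = 1 + 0.8 * f ω + e3 ω)
    (hy1 : ∀ ω, y ω 0 = y ω 1 + y ω 2)
    (yhat : α → Fin 3 → ℝ) (hyhat : ∀ i, Integrable (fun ω => yhat ω i) μ)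
    (hunbiased : ∀ i, (μ[fun ω => yhat ω i | I]) =ᵐ[μ] (μ[fun ω => y ω i | I]))
    (S : Matrix (Fin 3) (Fin 2) ℝ) (hS : S = !![1, 1; 1, 0; 0, 1])
    (G : Matrix (Fin 2) (Fin 3) ℝ) (hG : G = !![1/2, 0, 0; 1/2, 0, 0])
    (ytilde : α → Fin 3 → ℝ)
    (hytilde : ∀ ω, ytilde ω = (S * G).mulVec (yhat ω)) :
    ∀ i, (μ[fun ω => ytilde ω i | I]) =ᵐ[μ] (μ[fun ω => y ω i | I]) :=
  top_down_unbiased_example_general (m0 := m0) μ I f e2 e3 he2 he3 he2I he3I y hy2 hy3 hy1 yhat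
    hunbiased S hS G hG ytilde hytilde
end

section
/- With G = J − J W S⊥ (S⊥' W S⊥)^{-1} S⊥' (the alternative MinT formula), the bottom-level reconciled forecast satisfies G ŷ = ŷ^{bot} − J W S⊥ (S⊥' W S⊥)^{-1} (ŷ^{top} − C ŷ^{bot}); i.e., it modifies the bottom-level base forecasts only through the incoherency term ŷ^{top} − C ŷ^{bot}. In particular, if ŷ is coherent (ŷ^{top} = C ŷ^{bot}) then G ŷ = ŷ^{bot} and S G ŷ = ŷ. -/
open Matrix

/-!
`S⊥ᵀ = [I  −C]` maps `ŷ` to its incoherency `ŷᵗᵒᵖ − C ŷᵇᵒᵗ` and `J = [0  I]` extracts `ŷᵇᵒᵗ`, so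
the formula for `G ŷ` is just `G = J − K S⊥ᵀ` applied to `ŷ`, with `K = J W S⊥ (S⊥ᵀ W S⊥)⁻¹`.
For coherent `ŷ` the incoherency vanishes, and `S ŷᵇᵒᵗ = (C ŷᵇᵒᵗ, ŷᵇᵒᵗ) = ŷ`.
-/

section Partitioned

variable {R m n : Type*} [Ring R] [Fintype n]

theorem fromCols_zero_one_mulVec [Fintype m] [DecidableEq n] (v : m ⊕ n → R) :
    fromCols (0 : Matrix n m R) 1 *ᵥ v = fun i => v (Sum.inr i) := by
  rw [fromCols_mulVec, zero_mulVec, one_mulVec, zero_add]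
  rfl

theorem fromCols_one_neg_mulVec [Fintype m] [DecidableEq m] (C : Matrix m n R) (v : m ⊕ n → R) :
    fromCols 1 (-C) *ᵥ v = fun i => v (Sum.inl i) - (C *ᵥ fun j => v (Sum.inr j)) i := by
  rw [fromCols_mulVec, one_mulVec, neg_mulVec, ← sub_eq_add_neg]
  rfl

theorem fromRows_one_mulVec_of_coherent [DecidableEq n] {C : Matrix m n R} {v : m ⊕ n → R}
    (hv : ∀ i, v (Sum.inl i) = (C *ᵥ fun j => v (Sum.inr j)) i) :
    fromRows C 1 *ᵥ (fun i => v (Sum.inr i)) = v := by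
  ext (i | i)
  · simp [hv i]
  · simp

end Partitioned

theorem mint_alternative_formula_general {q n : ℕ}
    (C : Matrix (Fin q) (Fin n) ℝ)
    (W : Matrix (Fin q ⊕ Fin n) (Fin q ⊕ Fin n) ℝ)
    (S : Matrix (Fin q ⊕ Fin n) (Fin n) ℝ) (hS : S = Matrix.fromRows C 1)
    (J : Matrix (Fin n) (Fin q ⊕ Fin n) ℝ) (hJ : J = Matrix.fromCols 0 1)
    (Sperp : Matrix (Fin q ⊕ Fin n) (Fin q) ℝ)
    (hSperp : Sperpᵀ = Matrix.fromCols 1 (-C))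
    (G : Matrix (Fin n) (Fin q ⊕ Fin n) ℝ)
    (hG : G = J - J * W * Sperp * (Sperpᵀ * W * Sperp)⁻¹ * Sperpᵀ) :
    (∀ yhat : Fin q ⊕ Fin n → ℝ,
      G.mulVec yhat =
        (fun i => yhat (Sum.inr i)) -
          (J * W * Sperp * (Sperpᵀ * W * Sperp)⁻¹).mulVec
            (fun i => yhat (Sum.inl i) - C.mulVec (fun j => yhat (Sum.inr j)) i)) ∧
    (∀ yhat : Fin q ⊕ Fin n → ℝ,
      (∀ i, yhat (Sum.inl i) = C.mulVec (fun j => yhat (Sum.inr j)) i) →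
        G.mulVec yhat = (fun i => yhat (Sum.inr i)) ∧
          (S * G).mulVec yhat = yhat) := by
  have reconciled : ∀ yhat : Fin q ⊕ Fin n → ℝ, G *ᵥ yhat = (fun i => yhat (Sum.inr i)) -
      (J * W * Sperp * (Sperpᵀ * W * Sperp)⁻¹) *ᵥ
        (fun i => yhat (Sum.inl i) - (C *ᵥ fun j => yhat (Sum.inr j)) i) := by
    intro yhat
    rw [hG, sub_mulVec, ← mulVec_mulVec, hJ, fromCols_zero_one_mulVec, hSperp,
      fromCols_one_neg_mulVec]
  refine ⟨reconciled, fun yhat hcoh => ?_⟩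
  have incoherency_eq_zero :
      (fun i => yhat (Sum.inl i) - (C *ᵥ fun j => yhat (Sum.inr j)) i) = 0 :=
    funext fun i => sub_eq_zero.2 (hcoh i)
  have hGy : G *ᵥ yhat = fun i => yhat (Sum.inr i) := by
    rw [reconciled, incoherency_eq_zero, mulVec_zero, sub_zero]
  refine ⟨hGy, ?_⟩
  rw [← mulVec_mulVec, hGy, hS, fromRows_one_mulVec_of_coherent hcoh]

/-- With the alternative MinT formula `G = J − J W S⊥ (S⊥ᵀ W S⊥)⁻¹ S⊥ᵀ`, the
bottom-level reconciled forecast is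
`G ŷ = ŷᵇᵒᵗ − J W S⊥ (S⊥ᵀ W S⊥)⁻¹ (ŷᵗᵒᵖ − C ŷᵇᵒᵗ)`, i.e. it modifies the bottom
base forecasts only through the incoherency; in particular if `ŷ` is coherent
(`ŷᵗᵒᵖ = C ŷᵇᵒᵗ`) then `G ŷ = ŷᵇᵒᵗ` and `S G ŷ = ŷ`. -/
theorem mint_alternative_formula {q n : ℕ}
    (C : Matrix (Fin q) (Fin n) ℝ)
    (W : Matrix (Fin q ⊕ Fin n) (Fin q ⊕ Fin n) ℝ) (hW : W.PosDef)
    (S : Matrix (Fin q ⊕ Fin n) (Fin n) ℝ) (hS : S = Matrix.fromRows C 1)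
    (J : Matrix (Fin n) (Fin q ⊕ Fin n) ℝ) (hJ : J = Matrix.fromCols 0 1)
    (Sperp : Matrix (Fin q ⊕ Fin n) (Fin q) ℝ)
    (hSperp : Sperpᵀ = Matrix.fromCols 1 (-C))
    (G : Matrix (Fin n) (Fin q ⊕ Fin n) ℝ)
    (hG : G = J - J * W * Sperp * (Sperpᵀ * W * Sperp)⁻¹ * Sperpᵀ) :
    (∀ yhat : Fin q ⊕ Fin n → ℝ,
      G.mulVec yhat =
        (fun i => yhat (Sum.inr i)) -
          (J * W * Sperp * (Sperpᵀ * W * Sperp)⁻¹).mulVec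
            (fun i => yhat (Sum.inl i) - C.mulVec (fun j => yhat (Sum.inr j)) i)) ∧
    (∀ yhat : Fin q ⊕ Fin n → ℝ,
      (∀ i, yhat (Sum.inl i) = C.mulVec (fun j => yhat (Sum.inr j)) i) →
        G.mulVec yhat = (fun i => yhat (Sum.inr i)) ∧
          (S * G).mulVec yhat = yhat) :=
  mint_alternative_formula_general C W S hS J hJ Sperp hSperp G hG
end

section
/- With empirical covariance Ŵ = (1/T) E'E and G = J − J Ŵ S⊥ (S⊥'Ŵ S⊥)^{-1} S⊥', and writing Z' = −S⊥' E' = −S⊥' (Y' − Ŷ') (so Z is the T×(m−n) matrix of historical incoherencies, since S⊥' Y' = 0), one obtains G = J + (E^{bot})' Z (Z'Z)^{-1} S⊥', where E^{bot} = E J' collects the bottom-level forecast error columns. -/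
open Matrix

/-- With empirical covariance `Ŵ = (1/T) EᵀE`, incoherency matrix `Z = −E S⊥`
(so `Zᵀ = S⊥ᵀ Ŷᵀ`, since `S⊥ᵀ Yᵀ = 0`), and `Eᵇᵒᵗ = E Jᵀ` the bottom-level error
columns, the MinT map `G = J − J Ŵ S⊥ (S⊥ᵀ Ŵ S⊥)⁻¹ S⊥ᵀ` equals
`J + (Eᵇᵒᵗ)ᵀ Z (ZᵀZ)⁻¹ S⊥ᵀ`. -/
theorem mint_sample_incoherency_regression {T q n : ℕ} (hT : 0 < T)
    (C : Matrix (Fin q) (Fin n) ℝ)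
    (J : Matrix (Fin n) (Fin q ⊕ Fin n) ℝ) (hJ : J = Matrix.fromCols 0 1)
    (Sperp : Matrix (Fin q ⊕ Fin n) (Fin q) ℝ)
    (hSperp : Sperpᵀ = Matrix.fromCols 1 (-C))
    (Y Yhat : Matrix (Fin T) (Fin q ⊕ Fin n) ℝ)
    (hY : Sperpᵀ * Yᵀ = 0)
    (E : Matrix (Fin T) (Fin q ⊕ Fin n) ℝ) (hE : E = Y - Yhat)
    (W : Matrix (Fin q ⊕ Fin n) (Fin q ⊕ Fin n) ℝ)
    (hW : W = ((T : ℝ))⁻¹ • (Eᵀ * E))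
    (Z : Matrix (Fin T) (Fin q) ℝ) (hZ : Z = -(E * Sperp))
    (hZinv : IsUnit (Zᵀ * Z).det)
    (Ebot : Matrix (Fin T) (Fin n) ℝ) (hEbot : Ebot = E * Jᵀ)
    (G : Matrix (Fin n) (Fin q ⊕ Fin n) ℝ)
    (hG : G = J - J * W * Sperp * (Sperpᵀ * W * Sperp)⁻¹ * Sperpᵀ) :
    G = J + Ebotᵀ * Z * (Zᵀ * Z)⁻¹ * Sperpᵀ := by
  have hT0 : (T : ℝ) ≠ 0 := Nat.cast_ne_zero.mpr hT.ne'
  have hT0' : ((T : ℝ))⁻¹ ≠ 0 := inv_ne_zero hT0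
  have hMid : Sperpᵀ * W * Sperp = ((T : ℝ))⁻¹ • (Zᵀ * Z) := by
    rw [hW, hZ]
    simp [Matrix.smul_mul, Matrix.mul_smul, Matrix.transpose_neg, Matrix.neg_mul,
      Matrix.mul_neg, Matrix.transpose_mul, Matrix.mul_assoc]
  have hInv : (Sperpᵀ * W * Sperp)⁻¹ = (T : ℝ) • (Zᵀ * Z)⁻¹ := by
    rw [hMid]
    apply Matrix.inv_eq_right_inv
    rw [Matrix.smul_mul, Matrix.mul_smul, smul_smul, inv_mul_cancel₀ hT0, one_smul,
      Matrix.mul_nonsing_inv _ hZinv]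
  have hJW : J * W * Sperp = -(((T : ℝ))⁻¹ • (Ebotᵀ * Z)) := by
    rw [hW, hZ, hEbot]
    simp [Matrix.smul_mul, Matrix.mul_smul, Matrix.mul_neg, Matrix.transpose_mul,
      Matrix.mul_assoc]
  rw [hG, hJW, hInv]
  rw [sub_eq_add_neg]
  congr 1
  simp [Matrix.neg_mul, Matrix.smul_mul, Matrix.mul_smul, smul_smul,
    inv_mul_cancel₀ hT0, mul_inv_cancel₀ hT0, Matrix.mul_assoc]
end

section
/- The MinT-reconciled forecast based on the empirical covariance can be written as S G ŷ = S (ŷ^{bot} + Ψ' (ŷ^{top} − C ŷ^{bot})), where Ψ = (Z'Z)^{-1} Z' E^{bot} is the OLS coefficient matrix of regressing historical bottom-level forecast errors on historical incoherencies; consequently S⊥' (S G ŷ) = 0 for every ŷ. -/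
open Matrix

/-! Because `ZᵀZ` is symmetric, the transposed OLS coefficient `Ψᵀ` equals `Eᵇᵒᵗᵀ Z (ZᵀZ)⁻¹`,
so `G ŷ = ŷᵇᵒᵗ + Ψᵀ (S⊥ᵀ ŷ)` with `S⊥ᵀ ŷ = ŷᵗᵒᵖ − C ŷᵇᵒᵗ`. Coherence follows from
`S⊥ᵀ S = C − C = 0`. -/

section

variable {R : Type*} [CommRing R] {m q n : Type*} [Fintype q] [DecidableEq q]

theorem transpose_inv_transpose_mul_self_mul_transpose_mul [Fintype m]
    (Z : Matrix m q R) (E : Matrix m n R) :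
    ((Zᵀ * Z)⁻¹ * Zᵀ * E)ᵀ = Eᵀ * Z * (Zᵀ * Z)⁻¹ := by
  simp [transpose_mul, transpose_nonsing_inv, Matrix.mul_assoc]

theorem fromCols_one_neg_mul_fromRows_one [Fintype n] [DecidableEq n] (C : Matrix q n R) :
    fromCols (1 : Matrix q q R) (-C) * fromRows C (1 : Matrix n n R) = 0 := by
  simp [fromCols_mul_fromRows]

theorem fromCols_zero_one_add_mul_fromCols_one_neg_mulVec [Fintype n] [DecidableEq n]
    (C : Matrix q n R) (P : Matrix n q R) (v : q ⊕ n → R) :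
    (fromCols (0 : Matrix n q R) 1 + P * fromCols 1 (-C)) *ᵥ v =
      v ∘ Sum.inr + P *ᵥ (v ∘ Sum.inl - C *ᵥ (v ∘ Sum.inr)) := by
  simp [add_mulVec, ← mulVec_mulVec, neg_mulVec, sub_eq_add_neg, mulVec_add, mulVec_neg]

end

theorem mint_sample_reconciled_form_general {T q n : ℕ}
    (C : Matrix (Fin q) (Fin n) ℝ)
    (S : Matrix (Fin q ⊕ Fin n) (Fin n) ℝ) (hS : S = Matrix.fromRows C 1)
    (J : Matrix (Fin n) (Fin q ⊕ Fin n) ℝ) (hJ : J = Matrix.fromCols 0 1)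
    (Sperp : Matrix (Fin q ⊕ Fin n) (Fin q) ℝ)
    (hSperp : Sperpᵀ = Matrix.fromCols 1 (-C))
    (Z : Matrix (Fin T) (Fin q) ℝ)
    (Ebot : Matrix (Fin T) (Fin n) ℝ)
    (Ψ : Matrix (Fin q) (Fin n) ℝ) (hΨ : Ψ = (Zᵀ * Z)⁻¹ * Zᵀ * Ebot)
    (G : Matrix (Fin n) (Fin q ⊕ Fin n) ℝ)
    (hG : G = J + Ebotᵀ * Z * (Zᵀ * Z)⁻¹ * Sperpᵀ) :
    ∀ yhat : Fin q ⊕ Fin n → ℝ,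
      (S * G).mulVec yhat =
        S.mulVec ((fun i => yhat (Sum.inr i)) +
          Ψᵀ.mulVec
            (fun i => yhat (Sum.inl i) - C.mulVec (fun j => yhat (Sum.inr j)) i)) ∧
      Sperpᵀ.mulVec ((S * G).mulVec yhat) = 0 := by
  intro yhat
  have hG' : G = fromCols 0 1 + Ψᵀ * fromCols 1 (-C) := by
    rw [hG, hJ, hSperp, hΨ, transpose_inv_transpose_mul_self_mul_transpose_mul]
  refine ⟨?_, ?_⟩
  · rw [← mulVec_mulVec, hG', fromCols_zero_one_add_mul_fromCols_one_neg_mulVec]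
    rfl
  · rw [mulVec_mulVec, ← Matrix.mul_assoc, hSperp, hS, fromCols_one_neg_mul_fromRows_one,
      Matrix.zero_mul, zero_mulVec]

/-- The empirical MinT reconciled forecast can be written as
`S G ŷ = S (ŷᵇᵒᵗ + Ψᵀ (ŷᵗᵒᵖ − C ŷᵇᵒᵗ))` where `Ψ = (ZᵀZ)⁻¹ Zᵀ Eᵇᵒᵗ` is the OLS
coefficient matrix of regressing historical bottom-level forecast errors on
historical incoherencies; consequently `S⊥ᵀ (S G ŷ) = 0` for every `ŷ`. -/
theorem mint_sample_reconciled_form {T q n : ℕ}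
    (C : Matrix (Fin q) (Fin n) ℝ)
    (S : Matrix (Fin q ⊕ Fin n) (Fin n) ℝ) (hS : S = Matrix.fromRows C 1)
    (J : Matrix (Fin n) (Fin q ⊕ Fin n) ℝ) (hJ : J = Matrix.fromCols 0 1)
    (Sperp : Matrix (Fin q ⊕ Fin n) (Fin q) ℝ)
    (hSperp : Sperpᵀ = Matrix.fromCols 1 (-C))
    (Z : Matrix (Fin T) (Fin q) ℝ) (hZinv : IsUnit (Zᵀ * Z).det)
    (Ebot : Matrix (Fin T) (Fin n) ℝ)
    (Ψ : Matrix (Fin q) (Fin n) ℝ) (hΨ : Ψ = (Zᵀ * Z)⁻¹ * Zᵀ * Ebot)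
    (G : Matrix (Fin n) (Fin q ⊕ Fin n) ℝ)
    (hG : G = J + Ebotᵀ * Z * (Zᵀ * Z)⁻¹ * Sperpᵀ) :
    ∀ yhat : Fin q ⊕ Fin n → ℝ,
      (S * G).mulVec yhat =
        S.mulVec ((fun i => yhat (Sum.inr i)) +
          Ψᵀ.mulVec
            (fun i => yhat (Sum.inl i) - C.mulVec (fun j => yhat (Sum.inr j)) i)) ∧
      Sperpᵀ.mulVec ((S * G).mulVec yhat) = 0 :=
  mint_sample_reconciled_form_general C S hS J hJ Sperp hSperp Z Ebot Ψ hΨ G hG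
end
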